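/- arXiv:2105.01268 — 5 statements merged into one kernel-verified Lean document; each statement's English description precedes it below -/
import Mathlib

section
/- Let G be a group, S a monoid, and θ : G → S a partial representation. Then for each x ∈ G, θ_x θ_{x⁻¹} θ_x = θ_x; the elements ε_x = θ_x θ_{x⁻¹} are idempotents; ε_x ε_y = ε_y ε_x for all x, y ∈ G; and θ_x ε_y = ε_{xy} θ_x for all x, y ∈ G. -/
/-- basic properties of a partial representation of a group in a monoid. -/
theorem statement8 {G S : Type*} [Group G] [Monoid S] (θ : G → S)
    (h1 : θ 1 = 1)
    (h2 : ∀ x y : G, θ x * θ y * θ y⁻¹ = θ (x * y) * θ y⁻¹)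
    (h3 : ∀ x y : G, θ x⁻¹ * θ x * θ y = θ x⁻¹ * θ (x * y)) :
    (∀ x : G, θ x * θ x⁻¹ * θ x = θ x) ∧
    (∀ x : G, IsIdempotentElem (θ x * θ x⁻¹)) ∧
    (∀ x y : G, (θ x * θ x⁻¹) * (θ y * θ y⁻¹) = (θ y * θ y⁻¹) * (θ x * θ x⁻¹)) ∧
    (∀ x y : G, θ x * (θ y * θ y⁻¹) = (θ (x * y) * θ (x * y)⁻¹) * θ x) := by
  have hA : ∀ x : G, θ x * θ x⁻¹ * θ x = θ x := by
    intro x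
    have h := h2 x x⁻¹
    simpa [h1] using h
  have hD : ∀ x y : G, θ x * (θ y * θ y⁻¹) = (θ (x * y) * θ (x * y)⁻¹) * θ x := by
    intro x y
    have e2 : θ (x*y)⁻¹ * θ (x*y) * θ y⁻¹ = θ (x*y)⁻¹ * θ x := by
      simpa using h3 (x*y) y⁻¹
    calc θ x * (θ y * θ y⁻¹) = θ x * θ y * θ y⁻¹ := by rw [mul_assoc]
      _ = θ (x*y) * θ y⁻¹ := h2 x y
      _ = θ (x*y) * θ (x*y)⁻¹ * θ (x*y) * θ y⁻¹ := by rw [hA]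
      _ = θ (x*y) * (θ (x*y)⁻¹ * θ (x*y) * θ y⁻¹) := by
          simp [mul_assoc]
      _ = θ (x*y) * (θ (x*y)⁻¹ * θ x) := by rw [e2]
      _ = θ (x*y) * θ (x*y)⁻¹ * θ x := by rw [mul_assoc]
  refine ⟨hA, ?_, ?_, hD⟩
  · intro x
    show θ x * θ x⁻¹ * (θ x * θ x⁻¹) = θ x * θ x⁻¹
    calc θ x * θ x⁻¹ * (θ x * θ x⁻¹) = (θ x * θ x⁻¹ * θ x) * θ x⁻¹ := by
          simp only [mul_assoc]
      _ = θ x * θ x⁻¹ := by rw [hA]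
  · intro x y
    calc (θ x * θ x⁻¹) * (θ y * θ y⁻¹)
        = θ x * (θ x⁻¹ * (θ y * θ y⁻¹)) := by rw [mul_assoc]
      _ = θ x * (θ (x⁻¹ * y) * θ (x⁻¹ * y)⁻¹ * θ x⁻¹) := by rw [hD x⁻¹ y]
      _ = θ x * (θ (x⁻¹ * y) * θ (x⁻¹ * y)⁻¹) * θ x⁻¹ := by simp [mul_assoc]
      _ = θ (x * (x⁻¹ * y)) * θ (x * (x⁻¹ * y))⁻¹ * θ x * θ x⁻¹ := by
          rw [hD x (x⁻¹ * y)]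
      _ = (θ y * θ y⁻¹) * (θ x * θ x⁻¹) := by simp [mul_assoc]
end

section
/- Let S be a monoid and θ : G → S a partial representation. Set ε_x = θ_x θ_{x⁻¹}, S_x = ε_x S ε_x, and define α*_x : S_{x⁻¹} → S_x by α*_x(s) = θ_x s θ_{x⁻¹}. Then α* = (S_x, α*_x)_{x∈G} is a partial action of G on S: each S_x is a subsemigroup, each α*_x is a semigroup isomorphism with inverse α*_{x⁻¹}, S_1 = S, α*_1 = id, α*_{y⁻¹}(S_y ∩ S_{x⁻¹}) ⊆ S_{(xy)⁻¹}, and α*_x ∘ α*_y agrees with α*_{xy} on α*_{y⁻¹}(S_y ∩ S_{x⁻¹}). -/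
/-- a partial representation `θ : G → S` of a group in a monoid induces a
partial action `α* = (S_x, α*_x)` of `G` on `S`, where `S_x = ε_x S ε_x` with
`ε_x = θ x * θ x⁻¹`, and `α*_x (s) = θ x * s * θ x⁻¹`. -/
theorem statement10 {G S : Type*} [Group G] [Monoid S] (θ : G → S)
    (h1 : θ 1 = 1)
    (h2 : ∀ x y : G, θ x * θ y * θ y⁻¹ = θ (x * y) * θ y⁻¹)
    (h3 : ∀ x y : G, θ x⁻¹ * θ x * θ y = θ x⁻¹ * θ (x * y)) :
    ∀ Sx : G → Set S,
      (Sx = fun x => {s : S | ∃ t : S, s = (θ x * θ x⁻¹) * t * (θ x * θ x⁻¹)}) →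
    ∀ α : G → S → S, (α = fun x s => θ x * s * θ x⁻¹) →
      (Sx 1 = Set.univ) ∧
      (∀ x : G, ∀ s ∈ Sx x, ∀ t ∈ Sx x, s * t ∈ Sx x) ∧
      (∀ x : G, ∀ s ∈ Sx x⁻¹, α x s ∈ Sx x) ∧
      (∀ x : G, ∀ s ∈ Sx x⁻¹, ∀ t ∈ Sx x⁻¹, α x (s * t) = α x s * α x t) ∧
      (∀ x : G, ∀ s ∈ Sx x⁻¹, α x⁻¹ (α x s) = s) ∧
      (∀ x : G, ∀ s ∈ Sx x, α x (α x⁻¹ s) = s) ∧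
      (∀ s : S, α 1 s = s) ∧
      (∀ x y : G, (α y⁻¹) '' (Sx y ∩ Sx x⁻¹) ⊆ Sx (x * y)⁻¹) ∧
      (∀ x y : G, ∀ s ∈ (α y⁻¹) '' (Sx y ∩ Sx x⁻¹), α x (α y s) = α (x * y) s) := by
  intro Sx hSx α hα
  subst hSx hα
  -- θ x * θ x⁻¹ * θ x = θ x
  have hL : ∀ x : G, θ x * θ x⁻¹ * θ x = θ x := by
    intro x
    have := h2 x x⁻¹
    simpa [h1] using this
  have hL' : ∀ x : G, θ x * (θ x⁻¹ * θ x) = θ x := by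
    intro x; rw [← mul_assoc]; exact hL x
  have hR' : ∀ x : G, θ x⁻¹ * (θ x * θ x⁻¹) = θ x⁻¹ := by
    intro x; simpa using hL' x⁻¹
  have hE : ∀ x : G, (θ x * θ x⁻¹) * (θ x * θ x⁻¹) = θ x * θ x⁻¹ := by
    intro x; rw [← mul_assoc, hL]
  -- membership facts
  have memL : ∀ (x : G) (s : S),
      (∃ t : S, s = (θ x * θ x⁻¹) * t * (θ x * θ x⁻¹)) → (θ x * θ x⁻¹) * s = s := by
    rintro x s ⟨t, rfl⟩
    calc (θ x * θ x⁻¹) * ((θ x * θ x⁻¹) * t * (θ x * θ x⁻¹))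
        = ((θ x * θ x⁻¹) * (θ x * θ x⁻¹)) * (t * (θ x * θ x⁻¹)) := by
          simp only [mul_assoc]
      _ = (θ x * θ x⁻¹) * t * (θ x * θ x⁻¹) := by rw [hE]; simp only [mul_assoc]
  have memR : ∀ (x : G) (s : S),
      (∃ t : S, s = (θ x * θ x⁻¹) * t * (θ x * θ x⁻¹)) → s * (θ x * θ x⁻¹) = s := by
    rintro x s ⟨t, rfl⟩
    calc ((θ x * θ x⁻¹) * t * (θ x * θ x⁻¹)) * (θ x * θ x⁻¹)
        = (θ x * θ x⁻¹) * (t * ((θ x * θ x⁻¹) * (θ x * θ x⁻¹))) := by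
          simp only [mul_assoc]
      _ = (θ x * θ x⁻¹) * t * (θ x * θ x⁻¹) := by rw [hE]; simp only [mul_assoc]
  have memI : ∀ (x : G) (s : S), (θ x * θ x⁻¹) * s = s → s * (θ x * θ x⁻¹) = s →
      (∃ t : S, s = (θ x * θ x⁻¹) * t * (θ x * θ x⁻¹)) :=
    fun x s hl hr => ⟨s, by rw [hl, hr]⟩
  refine ⟨?_, ?_, ?_, ?_, ?_, ?_, ?_, ?_, ?_⟩
  · -- Sx 1 = univ
    ext s
    simp [h1]
  · -- closed under multiplication
    intro x s hs t ht
    exact memI x (s * t) (by rw [← mul_assoc, memL x s hs])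
      (by rw [mul_assoc, memR x t ht])
  · -- α x maps into Sx x (true for any s)
    intro x s _
    apply memI
    · calc (θ x * θ x⁻¹) * (θ x * s * θ x⁻¹)
          = (θ x * (θ x⁻¹ * θ x)) * (s * θ x⁻¹) := by simp only [mul_assoc]
        _ = θ x * s * θ x⁻¹ := by rw [hL']; simp only [mul_assoc]
    · calc (θ x * s * θ x⁻¹) * (θ x * θ x⁻¹)
          = θ x * (s * (θ x⁻¹ * (θ x * θ x⁻¹))) := by simp only [mul_assoc]
        _ = θ x * s * θ x⁻¹ := by rw [hR']; simp only [mul_assoc]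
  · -- multiplicativity
    intro x s hs t ht
    have hsr : s * (θ x⁻¹ * θ x) = s := by simpa using memR x⁻¹ s hs
    show θ x * (s * t) * θ x⁻¹ = (θ x * s * θ x⁻¹) * (θ x * t * θ x⁻¹)
    calc θ x * (s * t) * θ x⁻¹
        = θ x * ((s * (θ x⁻¹ * θ x)) * t) * θ x⁻¹ := by rw [hsr]
      _ = (θ x * s * θ x⁻¹) * (θ x * t * θ x⁻¹) := by simp only [mul_assoc]
  · -- α x⁻¹ ∘ α x = id on Sx x⁻¹
    intro x s hs
    have hl : (θ x⁻¹ * θ x) * s = s := by simpa using memL x⁻¹ s hs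
    have hr : s * (θ x⁻¹ * θ x) = s := by simpa using memR x⁻¹ s hs
    show θ x⁻¹ * (θ x * s * θ x⁻¹) * θ x⁻¹⁻¹ = s
    rw [inv_inv]
    calc θ x⁻¹ * (θ x * s * θ x⁻¹) * θ x
        = ((θ x⁻¹ * θ x) * s) * (θ x⁻¹ * θ x) := by simp only [mul_assoc]
      _ = s := by rw [hl, hr]
  · -- α x ∘ α x⁻¹ = id on Sx x
    intro x s hs
    have hl : (θ x * θ x⁻¹) * s = s := memL x s hs
    have hr : s * (θ x * θ x⁻¹) = s := memR x s hs
    show θ x * (θ x⁻¹ * s * θ x⁻¹⁻¹) * θ x⁻¹ = s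
    rw [inv_inv]
    calc θ x * (θ x⁻¹ * s * θ x) * θ x⁻¹
        = ((θ x * θ x⁻¹) * s) * (θ x * θ x⁻¹) := by simp only [mul_assoc]
      _ = s := by rw [hl, hr]
  · -- α 1 = id
    intro s
    show θ 1 * s * θ 1⁻¹ = s
    simp [h1]
  · -- domain condition
    rintro x y s ⟨u, ⟨huy, hux⟩, rfl⟩
    have hul : θ x⁻¹ * (θ x * u) = u := by
      have := memL x⁻¹ u hux
      rw [inv_inv, mul_assoc] at this
      exact this
    have hur : u * (θ x⁻¹ * θ x) = u := by
      have := memR x⁻¹ u hux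
      rw [inv_inv] at this
      exact this
    have hur' : u * (θ y * θ y⁻¹) = u := memR y u huy
    have e1 : θ (x*y)⁻¹ * (θ (x*y) * θ y⁻¹) = θ (x*y)⁻¹ * θ x := by
      have := h3 (x*y) y⁻¹
      rw [show (x*y) * y⁻¹ = x by group] at this
      rw [← this, mul_assoc]
    have e2 : θ (x*y)⁻¹ * (θ x * θ x⁻¹) = θ y⁻¹ * θ x⁻¹ := by
      have := h2 (x*y)⁻¹ x
      rw [show (x*y)⁻¹ * x = y⁻¹ by group] at this
      rw [← this, mul_assoc]
    have e3 : θ y⁻¹ * (θ y * θ (x*y)⁻¹) = θ y⁻¹ * θ x⁻¹ := by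
      have := h3 y (x*y)⁻¹
      rw [show y * (x*y)⁻¹ = x⁻¹ by group] at this
      rw [← this, mul_assoc]
    have e4 : θ x⁻¹ * (θ x * θ y) = θ x⁻¹ * θ (x*y) := by
      have := h3 x y
      rw [← this, mul_assoc]
    refine memI (x*y)⁻¹ _ ?_ ?_
    · show (θ (x*y)⁻¹ * θ ((x*y)⁻¹)⁻¹) * (θ y⁻¹ * u * θ y⁻¹⁻¹) = θ y⁻¹ * u * θ y⁻¹⁻¹
      simp only [inv_inv]
      calc (θ (x*y)⁻¹ * θ (x*y)) * (θ y⁻¹ * u * θ y)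
            = (θ (x*y)⁻¹ * (θ (x*y) * θ y⁻¹)) * ((θ x⁻¹ * (θ x * u)) * θ y) := by
              rw [hul]; simp only [mul_assoc]
          _ = (θ (x*y)⁻¹ * θ x) * ((θ x⁻¹ * (θ x * u)) * θ y) := by rw [e1]
          _ = (θ (x*y)⁻¹ * (θ x * θ x⁻¹)) * ((θ x * u) * θ y) := by simp only [mul_assoc]
          _ = (θ y⁻¹ * θ x⁻¹) * ((θ x * u) * θ y) := by rw [e2]
          _ = θ y⁻¹ * ((θ x⁻¹ * (θ x * u)) * θ y) := by simp only [mul_assoc]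
          _ = θ y⁻¹ * u * θ y := by rw [hul, mul_assoc]
    · show (θ y⁻¹ * u * θ y⁻¹⁻¹) * (θ (x*y)⁻¹ * θ ((x*y)⁻¹)⁻¹) = θ y⁻¹ * u * θ y⁻¹⁻¹
      simp only [inv_inv]
      calc (θ y⁻¹ * u * θ y) * (θ (x*y)⁻¹ * θ (x*y))
            = θ y⁻¹ * ((u * (θ y * θ y⁻¹)) * (θ y * (θ (x*y)⁻¹ * θ (x*y)))) := by
              rw [hur']; simp only [mul_assoc]
          _ = θ y⁻¹ * (u * (θ y * ((θ y⁻¹ * (θ y * θ (x*y)⁻¹)) * θ (x*y)))) := by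
              simp only [mul_assoc]
          _ = θ y⁻¹ * (u * (θ y * ((θ y⁻¹ * θ x⁻¹) * θ (x*y)))) := by rw [e3]
          _ = θ y⁻¹ * ((u * (θ y * θ y⁻¹)) * (θ x⁻¹ * θ (x*y))) := by simp only [mul_assoc]
          _ = θ y⁻¹ * (u * (θ x⁻¹ * θ (x*y))) := by rw [hur']
          _ = θ y⁻¹ * (u * (θ x⁻¹ * (θ x * θ y))) := by rw [e4]
          _ = θ y⁻¹ * ((u * (θ x⁻¹ * θ x)) * θ y) := by simp only [mul_assoc]
          _ = θ y⁻¹ * u * θ y := by rw [hur, mul_assoc]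
  · -- composition
    rintro x y s ⟨u, ⟨huy, hux⟩, rfl⟩
    show θ x * (θ y * (θ y⁻¹ * u * θ y⁻¹⁻¹) * θ y⁻¹) * θ x⁻¹
        = θ (x*y) * (θ y⁻¹ * u * θ y⁻¹⁻¹) * θ (x*y)⁻¹
    rw [inv_inv]
    have huyl : θ y * (θ y⁻¹ * u) = u := by
      have := memL y u huy
      rw [mul_assoc] at this
      exact this
    have huyr : u * (θ y * θ y⁻¹) = u := memR y u huy
    have e3 : θ y⁻¹ * (θ y * θ (x*y)⁻¹) = θ y⁻¹ * θ x⁻¹ := by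
      have := h3 y (x*y)⁻¹
      rw [show y * (x*y)⁻¹ = x⁻¹ by group] at this
      rw [← this, mul_assoc]
    have key : θ y * (θ y⁻¹ * u * θ y) * θ y⁻¹ = u := by
      calc θ y * (θ y⁻¹ * u * θ y) * θ y⁻¹
          = (θ y * (θ y⁻¹ * u)) * (θ y * θ y⁻¹) := by simp only [mul_assoc]
        _ = u * (θ y * θ y⁻¹) := by rw [huyl]
        _ = u := huyr
    have claim1 : θ (x*y) * (θ y⁻¹ * u) = θ x * u := by
      calc θ (x*y) * (θ y⁻¹ * u)
          = θ (x*y) * (θ y⁻¹ * (θ y * (θ y⁻¹ * u))) := by rw [huyl]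
        _ = (θ (x*y) * θ y⁻¹) * (θ y * (θ y⁻¹ * u)) := by simp only [mul_assoc]
        _ = (θ x * θ y * θ y⁻¹) * (θ y * (θ y⁻¹ * u)) := by rw [h2 x y]
        _ = θ x * (θ y * (θ y⁻¹ * (θ y * (θ y⁻¹ * u)))) := by simp only [mul_assoc]
        _ = θ x * u := by rw [huyl, huyl]
    have claim2 : u * (θ y * θ (x*y)⁻¹) = u * θ x⁻¹ := by
      calc u * (θ y * θ (x*y)⁻¹)
          = (u * (θ y * θ y⁻¹)) * (θ y * θ (x*y)⁻¹) := by rw [huyr]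
        _ = u * (θ y * ((θ y⁻¹ * (θ y * θ (x*y)⁻¹)))) := by simp only [mul_assoc]
        _ = u * (θ y * (θ y⁻¹ * θ x⁻¹)) := by rw [e3]
        _ = (u * (θ y * θ y⁻¹)) * θ x⁻¹ := by simp only [mul_assoc]
        _ = u * θ x⁻¹ := by rw [huyr]
    rw [key]
    calc θ x * u * θ x⁻¹
        = θ x * (u * θ x⁻¹) := by rw [mul_assoc]
      _ = θ x * (u * (θ y * θ (x*y)⁻¹)) := by rw [claim2]
      _ = (θ (x*y) * (θ y⁻¹ * u)) * (θ y * θ (x*y)⁻¹) := by rw [claim1]; simp only [mul_assoc]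
      _ = θ (x*y) * (θ y⁻¹ * u * θ y) * θ (x*y)⁻¹ := by simp only [mul_assoc]
end

section
/- Let Θ : G → PicS(R) be a unital partial representation with associated partial action α of G on the center Z, defined via α_x(r 1_{x⁻¹}) = Σ_{(x)} ω_x r ω_{x⁻¹}. Then α_x(r 1_{x⁻¹}) · u_x = u_x · r for all u_x ∈ Θ_x and r ∈ Z. Moreover, if M is an R-bimodule with M | Θ_x, then α_x(r 1_{x⁻¹}) · m = m · r for all m ∈ M and r ∈ Z. -/
noncomputable section

open MulOpposite

universe u v w

/-- A unital partial representation `Θ : G → PicS(R)` of a group `G` into the Picard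
semigroup of partially invertible `R`-bimodules, presented by chosen representatives:
* `R`-bimodules `Θ x` with `Θ 1 ≅ R`;
* central idempotents `e x ∈ R` with `ε_x = Θ x ⊗ Θ x⁻¹ ≅ R·(e x)`, the isomorphism
  being given by a surjective Morita pairing `τ x : Θ x ⊗ Θ x⁻¹ → R·(e x)` (written
  `u·v`), which is `R`-bilinear, `R`-balanced and associative
  (`(u v) u' = u (v u')`), together with a decomposition `∑ ωᵢ ωᵢ' = e x`;
* `Θ x` is a unital `R e x`-`R e x⁻¹`-bimodule;
* the partial representation identities, through the induced `R`-bimodule isomorphisms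
  `Θ x · 1_y ≅ 1_{xy} · Θ x` (the maps `kap x y`, given as corner maps with inverse) and
  the centrality identity for `Θ x ⊗ Θ y ⊗ Θ (xy)⁻¹ ≅ R 1_x 1_{xy}`. -/
structure UPR (R : Type u) [Ring R] (G : Type v) [Group G] where
  Θ : G → Type w
  [instAdd : ∀ x, AddCommGroup (Θ x)]
  [instL : ∀ x, Module R (Θ x)]
  [instR : ∀ x, Module Rᵐᵒᵖ (Θ x)]
  [instC : ∀ x, SMulCommClass R Rᵐᵒᵖ (Θ x)]
  e : G → R
  e_center : ∀ x, e x ∈ Subring.center R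
  e_idem : ∀ x, IsIdempotentElem (e x)
  e_one : e 1 = 1
  τ : ∀ x : G, Θ x → Θ x⁻¹ → R
  τ_addl : ∀ (x : G) (u v : Θ x) (w : Θ x⁻¹), τ x (u + v) w = τ x u w + τ x v w
  τ_addr : ∀ (x : G) (u : Θ x) (v w : Θ x⁻¹), τ x u (v + w) = τ x u v + τ x u w
  τ_linl : ∀ (x : G) (r : R) (u : Θ x) (v : Θ x⁻¹), τ x (r • u) v = r * τ x u v
  τ_linr : ∀ (x : G) (r : R) (u : Θ x) (v : Θ x⁻¹), τ x u (op r • v) = τ x u v * r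
  τ_bal : ∀ (x : G) (r : R) (u : Θ x) (v : Θ x⁻¹), τ x (op r • u) v = τ x u (r • v)
  τ_mem : ∀ (x : G) (u : Θ x) (v : Θ x⁻¹), τ x u v * e x = τ x u v
  unital_l : ∀ (x : G) (u : Θ x), e x • u = u
  unital_r : ∀ (x : G) (u : Θ x), op (e x⁻¹) • u = u
  assoc₁ : ∀ (x : G) (u u' : Θ x) (v : Θ x⁻¹),
    τ x u v • u' = op (τ x⁻¹ v (cast (congrArg Θ (inv_inv x).symm) u')) • u
  assoc₂ : ∀ (x : G) (v v' : Θ x⁻¹) (u : Θ x),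
    τ x⁻¹ v (cast (congrArg Θ (inv_inv x).symm) u) • v' = op (τ x u v') • v
  dec : ∀ x : G, ∃ (n : ℕ) (ω : Fin n → Θ x × Θ x⁻¹),
    (∑ i, τ x (ω i).1 (ω i).2) = e x
  one_equiv : Θ 1 ≃+ R
  one_equiv_l : ∀ (r : R) (u : Θ 1), one_equiv (r • u) = r * one_equiv u
  one_equiv_r : ∀ (r : R) (u : Θ 1), one_equiv (op r • u) = one_equiv u * r
  triple : ∀ (x y : G) (r : R), r ∈ Subring.center R →
    ∀ (ux : Θ x) (ux' : Θ x⁻¹) (uy : Θ y) (uy' : Θ y⁻¹)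
      (uxy : Θ (x * y)) (uxy' : Θ (x * y)⁻¹),
      τ x (op (τ y uy uy') • ux) ux' * τ (x * y) (op r • uxy) uxy'
        = τ x (op (τ y (op r • uy) uy') • ux) ux' * τ (x * y) uxy uxy'
  kap : ∀ (x : G), G → Θ x → Θ x
  kap_add : ∀ (x y : G) (a b : Θ x), kap x y (a + b) = kap x y a + kap x y b
  kap_l : ∀ (x y : G) (r : R) (a : Θ x), kap x y (r • a) = r • kap x y a
  kap_r : ∀ (x y : G) (r : R) (a : Θ x), kap x y (op r • a) = op r • kap x y a
  kap_im : ∀ (x y : G) (a : Θ x), e (x * y) • kap x y a = kap x y a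
  kap_fac : ∀ (x y : G) (a : Θ x), kap x y (op (e y) • a) = kap x y a
  kap_bij : ∀ x y : G, ∃ k' : Θ x → Θ x,
    (∀ a b, k' (a + b) = k' a + k' b) ∧ (∀ (r : R) a, k' (r • a) = r • k' a) ∧
    (∀ (r : R) a, k' (op r • a) = op r • k' a) ∧
    (∀ a, op (e y) • k' a = k' a) ∧ (∀ a, k' (e (x * y) • a) = k' a) ∧
    (∀ a, k' (kap x y a) = op (e y) • a) ∧ (∀ a, kap x y (k' a) = e (x * y) • a)

attribute [instance] UPR.instAdd UPR.instL UPR.instR UPR.instC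

/-- `M | N` : the `R`-bimodule `M` is isomorphic to a direct summand of a finite direct
power of the `R`-bimodule `N`. -/
def BimodDvd (R : Type u) [Ring R] (M N : Type w) [AddCommGroup M] [AddCommGroup N]
    [Module R M] [Module Rᵐᵒᵖ M] [Module R N] [Module Rᵐᵒᵖ N] : Prop :=
  ∃ (n : ℕ) (M' : Type w) (_ : AddCommGroup M') (_ : Module R M') (_ : Module Rᵐᵒᵖ M')
    (e : (Fin n → N) ≃+ M × M'),
    (∀ (r : R) (v : Fin n → N), e (r • v) = r • e v) ∧
    (∀ (r : R) (v : Fin n → N), e (op r • v) = op r • e v)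

/-- let `Θ : G → PicS(R)` be a unital partial representation, with induced
partial action `α` of `G` on the center `Z` of `R` defined by
`α_x(r 1_{x⁻¹}) = ∑ᵢ ω_x,ᵢ · r · ω_x,ᵢ'`.  Then `α_x(r 1_{x⁻¹}) • u = u • r` for all
`u ∈ Θ x`, `r ∈ Z`; moreover, if `M` is an `R`-bimodule with `M | Θ x`, then
`α_x(r 1_{x⁻¹}) • m = m • r` for all `m ∈ M`, `r ∈ Z`. -/
theorem statement16 (R : Type u) [Ring R] (G : Type v) [Group G] (S : UPR R G)
    (nn : G → ℕ) (ω : ∀ x : G, Fin (nn x) → S.Θ x × S.Θ x⁻¹)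
    (hω : ∀ x : G, (∑ i, S.τ x (ω x i).1 (ω x i).2) = S.e x) :
    ∀ A : G → R → R, (A = fun x r => ∑ i, S.τ x (op r • (ω x i).1) ((ω x i).2)) →
      (∀ (x : G) (r : R), r ∈ Subring.center R →
        ∀ u : S.Θ x, A x (r * S.e x⁻¹) • u = op r • u) ∧
      (∀ (x : G) (M : Type w) (_ : AddCommGroup M) (_ : Module R M) (_ : Module Rᵐᵒᵖ M)
          (_ : SMulCommClass R Rᵐᵒᵖ M),
        BimodDvd R M (S.Θ x) →
        ∀ (r : R), r ∈ Subring.center R → ∀ m : M, A x (r * S.e x⁻¹) • m = op r • m) := by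
  intro A hA
  subst hA
  have key : ∀ (x : G) (r : R), r ∈ Subring.center R →
      ∀ u : S.Θ x,
        (∑ i, S.τ x (op (r * S.e x⁻¹) • (ω x i).1) ((ω x i).2)) • u = op r • u := by
    intro x r hr u
    have hr' := Subring.mem_center_iff.mp hr
    have step : ∀ i, S.τ x (op (r * S.e x⁻¹) • (ω x i).1) ((ω x i).2) • u
        = op r • (S.τ x (ω x i).1 ((ω x i).2) • u) := by
      intro i
      have h1 : op (r * S.e x⁻¹) • (ω x i).1 = op r • (ω x i).1 := by
        rw [op_mul, mul_smul, S.unital_r]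
      rw [h1, S.assoc₁ x (op r • (ω x i).1) u ((ω x i).2),
        S.assoc₁ x ((ω x i).1) u ((ω x i).2)]
      rw [← mul_smul, ← op_mul, ← hr', op_mul, mul_smul]
    calc (∑ i, S.τ x (op (r * S.e x⁻¹) • (ω x i).1) ((ω x i).2)) • u
        = ∑ i, S.τ x (op (r * S.e x⁻¹) • (ω x i).1) ((ω x i).2) • u :=
          Finset.sum_smul
      _ = ∑ i, op r • (S.τ x (ω x i).1 ((ω x i).2) • u) :=
          Finset.sum_congr rfl (fun i _ => step i)
      _ = op r • ((∑ i, S.τ x (ω x i).1 ((ω x i).2)) • u) := by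
          rw [Finset.sum_smul, Finset.smul_sum]
      _ = op r • u := by rw [hω, S.unital_l]
  refine ⟨key, ?_⟩
  intro x M _ _ _ _ hdvd r hr m
  obtain ⟨n, M', _, _, _, eqv, hl, hr2⟩ := hdvd
  set a : R := ∑ i, S.τ x (op (r * S.e x⁻¹) • (ω x i).1) ((ω x i).2) with ha
  set v : Fin n → S.Θ x := eqv.symm (m, 0) with hv
  have hsv : a • v = op r • v := funext fun i => key x r hr (v i)
  have h2 : a • ((m, (0 : M')) : M × M') = op r • ((m, 0) : M × M') := by
    have h3 := congrArg eqv hsv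
    rwa [hl, hr2, hv, eqv.apply_symm_apply] at h3
  exact congrArg Prod.fst h2
end
end

section
/- Let R ⊆ S be a ring extension with the same unity and let Θ : G → S_R(S) be a unital partial representation into the monoid of R-subbimodules of S, with Θ_x Θ_{x⁻¹} = R1_x. Then for every x ∈ G the class [Θ_x] lies in PicS(R): Θ_x is finitely generated projective as a left and as a right R-module, and the canonical maps R → End(Θ_x as right R-module) (left multiplication) and R → End(Θ_x as left R-module) (right multiplication) are surjective. -/
noncomputable section

open MulOpposite

universe u v

/-- The product `MN = { ∑ mᵢnᵢ }` of two additive subgroups of a ring `S`, i.e. the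
multiplication of the monoid `S_R(S)` of `R`-subbimodules of `S`. -/
def sMul {S : Type u} [Ring S] (A B : AddSubgroup S) : AddSubgroup S :=
  AddSubgroup.closure {z : S | ∃ a ∈ A, ∃ b ∈ B, z = a * b}

/-!
Specialising the partial-representation axiom to `y = x⁻¹` and using `Θ 1 = R` gives
`Θ x Θ x⁻¹ Θ x = Θ x`. Since `Θ x Θ x⁻¹ = R 1_x` and `Θ x⁻¹ Θ x = R 1_{x⁻¹}`, the central
idempotent `1_x` acts as the identity on the left of `Θ x` and `1_{x⁻¹}` on the right, and all
products of elements of `Θ x` and `Θ x⁻¹` lie in `R`. Writing `1_x = ∑ uᵢ wᵢ` with `uᵢ ∈ Θ x`,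
`wᵢ ∈ Θ x⁻¹` gives the right dual basis `v = ∑ uᵢ (wᵢ v)`, and a right `R`-linear `φ` is left
multiplication by `∑ φ(uᵢ) wᵢ ∈ R`; symmetrically on the other side with `1_{x⁻¹}`.
-/

open scoped Pointwise

namespace PartialRepresentation

section sMul

variable {S : Type*} [Ring S]

theorem sMul_eq_mul (A B : AddSubgroup S) : sMul A B = A * B := by
  apply le_antisymm
  · rw [sMul, AddSubgroup.closure_le]
    rintro z ⟨a, ha, b, hb, rfl⟩
    exact AddSubmonoid.mul_mem_mul ha hb
  · exact AddSubmonoid.mul_le.mpr fun a ha b hb => AddSubgroup.subset_closure ⟨a, ha, b, hb, rfl⟩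

theorem mul_mem_sMul {A B : AddSubgroup S} {a b : S} (ha : a ∈ A) (hb : b ∈ B) :
    a * b ∈ sMul A B :=
  AddSubgroup.subset_closure ⟨a, ha, b, hb, rfl⟩

theorem sMul_assoc (A B C : AddSubgroup S) : sMul (sMul A B) C = sMul A (sMul B C) := by
  simp only [sMul_eq_mul]
  exact AddSubgroup.toAddSubmonoid_injective (mul_assoc A.toAddSubmonoid _ _)

theorem sMul_eq_right_of_one_mem {A B : AddSubgroup S} (h1 : (1 : S) ∈ A)
    (hAB : ∀ a ∈ A, ∀ b ∈ B, a * b ∈ B) : sMul A B = B := by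
  refine le_antisymm ?_ fun b hb => by simpa using mul_mem_sMul h1 hb
  rw [sMul, AddSubgroup.closure_le]
  rintro z ⟨a, ha, b, hb, rfl⟩
  exact hAB a ha b hb

theorem exists_fin_sum_of_mem_sMul {A B : AddSubgroup S} {z : S} (hz : z ∈ sMul A B) :
    ∃ (n : ℕ) (a b : Fin n → S), (∀ i, a i ∈ A) ∧ (∀ i, b i ∈ B) ∧ z = ∑ i, a i * b i := by
  rw [sMul_eq_mul, ← AddSubgroup.mem_toAddSubmonoid, AddSubgroup.mul_toAddSubmonoid,
    AddSubmonoid.mul_eq_closure_mul_set] at hz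
  obtain ⟨l, hl, rfl⟩ := AddSubmonoid.exists_list_of_mem_closure hz
  choose a ha b hb hab using fun i : Fin l.length => Set.mem_mul.mp (hl _ (List.getElem_mem i.2))
  exact ⟨l.length, a, b, ha, hb, by simp [hab]⟩

theorem mul_eq_of_mem_sMul_left {A B : AddSubgroup S} {e : S} (h : ∀ a ∈ A, e * a = a)
    {v : S} (hv : v ∈ sMul A B) : e * v = v := by
  induction hv using AddSubgroup.closure_induction with
  | mem z hz =>
    obtain ⟨a, ha, b, -, rfl⟩ := hz
    rw [← mul_assoc, h a ha]
  | zero => exact mul_zero e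
  | add p q _ _ hp hq => rw [mul_add, hp, hq]
  | neg p _ hp => rw [mul_neg, hp]

theorem mul_eq_of_mem_sMul_right {A B : AddSubgroup S} {e : S} (h : ∀ b ∈ B, b * e = b)
    {v : S} (hv : v ∈ sMul A B) : v * e = v := by
  induction hv using AddSubgroup.closure_induction with
  | mem z hz =>
    obtain ⟨a, -, b, hb, rfl⟩ := hz
    rw [mul_assoc, h b hb]
  | zero => exact zero_mul e
  | add p q _ _ hp hq => rw [add_mul, hp, hq]
  | neg p _ hp => rw [neg_mul, hp]

theorem exists_eq_mul_of_mem_closure {R : Subring S} {e q : S}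
    (hq : q ∈ AddSubgroup.closure {z : S | ∃ r ∈ R, z = r * e}) : ∃ r ∈ R, q = r * e := by
  induction hq using AddSubgroup.closure_induction with
  | mem z hz => exact hz
  | zero => exact ⟨0, zero_mem R, (zero_mul e).symm⟩
  | add p q _ _ hp hq =>
    obtain ⟨r, hr, rfl⟩ := hp
    obtain ⟨s, hs, rfl⟩ := hq
    exact ⟨r + s, add_mem hr hs, (add_mul r s e).symm⟩
  | neg p _ hp =>
    obtain ⟨r, hr, rfl⟩ := hp
    exact ⟨-r, neg_mem hr, (neg_mul r e).symm⟩

end sMul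

theorem map_sum_of_map_add {A B ι : Type*} [AddCommGroup A] [AddCommGroup B] {M : AddSubgroup A}
    {φ : A → B} (hadd : ∀ v ∈ M, ∀ w ∈ M, φ (v + w) = φ v + φ w) (s : Finset ι) {f : ι → A}
    (hf : ∀ i, f i ∈ M) : φ (∑ i ∈ s, f i) = ∑ i ∈ s, φ (f i) := by
  let ψ : M →+ B := AddMonoidHom.mk' (fun v => φ v) fun v w => hadd v v.2 w w.2
  have hψ := map_sum ψ (fun i => ⟨f i, hf i⟩) s
  rwa [AddMonoidHom.mk'_apply, AddSubgroup.val_finsetSum] at hψ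

section DualBasis

variable {S : Type*} [Ring S]

def HasRightDualBasis (R : Subring S) (M : AddSubgroup S) : Prop :=
  ∃ (n : ℕ) (u : Fin n → S) (_ : ∀ i, u i ∈ M) (f : Fin n → S → S),
    (∀ i, ∀ v ∈ M, f i v ∈ R) ∧
    (∀ i, ∀ v ∈ M, ∀ w ∈ M, f i (v + w) = f i v + f i w) ∧
    (∀ i, ∀ v ∈ M, ∀ r ∈ R, f i (v * r) = f i v * r) ∧
    (∀ v ∈ M, v = ∑ i, u i * f i v)

def HasLeftDualBasis (R : Subring S) (M : AddSubgroup S) : Prop :=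
  ∃ (m : ℕ) (u : Fin m → S) (_ : ∀ j, u j ∈ M) (g : Fin m → S → S),
    (∀ j, ∀ v ∈ M, g j v ∈ R) ∧
    (∀ j, ∀ v ∈ M, ∀ w ∈ M, g j (v + w) = g j v + g j w) ∧
    (∀ j, ∀ v ∈ M, ∀ r ∈ R, g j (r * v) = r * g j v) ∧
    (∀ v ∈ M, v = ∑ j, g j v * u j)

def RightEndIsLeftMul (R : Subring S) (M : AddSubgroup S) : Prop :=
  ∀ φ : S → S, (∀ v ∈ M, φ v ∈ M) →
    (∀ v ∈ M, ∀ w ∈ M, φ (v + w) = φ v + φ w) →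
    (∀ v ∈ M, ∀ r ∈ R, φ (v * r) = φ v * r) →
    ∃ r ∈ R, ∀ v ∈ M, φ v = r * v

def LeftEndIsRightMul (R : Subring S) (M : AddSubgroup S) : Prop :=
  ∀ φ : S → S, (∀ v ∈ M, φ v ∈ M) →
    (∀ v ∈ M, ∀ w ∈ M, φ (v + w) = φ v + φ w) →
    (∀ v ∈ M, ∀ r ∈ R, φ (r * v) = r * φ v) →
    ∃ r ∈ R, ∀ v ∈ M, φ v = v * r

variable {R : Subring S} {M N : AddSubgroup S} {n : ℕ} {u w : Fin n → S}

theorem eq_sum_mul_mul_of_sum_mul_eq {v : S} (hsum : (∑ i, u i * w i) * v = v) :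
    v = ∑ i, u i * (w i * v) := by
  simp_rw [← mul_assoc, ← Finset.sum_mul, hsum]

theorem eq_sum_mul_mul_of_mul_sum_eq {v : S} (hsum : v * ∑ i, u i * w i = v) :
    v = ∑ i, v * u i * w i := by
  simp_rw [mul_assoc, ← Finset.mul_sum, hsum]

theorem hasRightDualBasis_of_sum_mul_eq (hu : ∀ i, u i ∈ M) (hw : ∀ i, w i ∈ N)
    (hNM : ∀ b ∈ N, ∀ v ∈ M, b * v ∈ R) (hsum : ∀ v ∈ M, (∑ i, u i * w i) * v = v) :
    HasRightDualBasis R M :=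
  ⟨n, u, hu, fun i s => w i * s, fun i v hv => hNM _ (hw i) v hv,
    fun _ _ _ _ _ => mul_add _ _ _, fun _ _ _ _ _ => (mul_assoc _ _ _).symm,
    fun v hv => eq_sum_mul_mul_of_sum_mul_eq (hsum v hv)⟩

theorem hasLeftDualBasis_of_mul_sum_eq (hu : ∀ i, u i ∈ N) (hw : ∀ i, w i ∈ M)
    (hMN : ∀ v ∈ M, ∀ b ∈ N, v * b ∈ R) (hsum : ∀ v ∈ M, v * ∑ i, u i * w i = v) :
    HasLeftDualBasis R M :=
  ⟨n, w, hw, fun i s => s * u i, fun i v hv => hMN v hv _ (hu i),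
    fun _ _ _ _ _ => add_mul _ _ _, fun _ _ _ _ _ => mul_assoc _ _ _,
    fun v hv => eq_sum_mul_mul_of_mul_sum_eq (hsum v hv)⟩

theorem rightEndIsLeftMul_of_sum_mul_eq (hu : ∀ i, u i ∈ M) (hw : ∀ i, w i ∈ N)
    (hMN : ∀ v ∈ M, ∀ b ∈ N, v * b ∈ R) (hNM : ∀ b ∈ N, ∀ v ∈ M, b * v ∈ R)
    (hMR : ∀ r ∈ R, ∀ v ∈ M, v * r ∈ M) (hsum : ∀ v ∈ M, (∑ i, u i * w i) * v = v) :
    RightEndIsLeftMul R M := by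
  intro φ hmem hadd hlin
  refine ⟨∑ i, φ (u i) * w i, sum_mem fun i _ => hMN _ (hmem _ (hu i)) _ (hw i), fun v hv => ?_⟩
  have hcoeff (i : Fin n) : w i * v ∈ R := hNM _ (hw i) v hv
  calc φ v = φ (∑ i, u i * (w i * v)) := by rw [← eq_sum_mul_mul_of_sum_mul_eq (hsum v hv)]
    _ = ∑ i, φ (u i * (w i * v)) :=
        map_sum_of_map_add hadd _ fun i => hMR _ (hcoeff i) _ (hu i)
    _ = ∑ i, φ (u i) * (w i * v) :=
        Finset.sum_congr rfl fun i _ => hlin _ (hu i) _ (hcoeff i)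
    _ = (∑ i, φ (u i) * w i) * v := by simp_rw [Finset.sum_mul, mul_assoc]

theorem leftEndIsRightMul_of_mul_sum_eq (hu : ∀ i, u i ∈ N) (hw : ∀ i, w i ∈ M)
    (hMN : ∀ v ∈ M, ∀ b ∈ N, v * b ∈ R) (hNM : ∀ b ∈ N, ∀ v ∈ M, b * v ∈ R)
    (hRM : ∀ r ∈ R, ∀ v ∈ M, r * v ∈ M) (hsum : ∀ v ∈ M, v * ∑ i, u i * w i = v) :
    LeftEndIsRightMul R M := by
  intro φ hmem hadd hlin
  refine ⟨∑ i, u i * φ (w i), sum_mem fun i _ => hNM _ (hu i) _ (hmem _ (hw i)), fun v hv => ?_⟩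
  have hcoeff (i : Fin n) : v * u i ∈ R := hMN v hv _ (hu i)
  calc φ v = φ (∑ i, v * u i * w i) := by rw [← eq_sum_mul_mul_of_mul_sum_eq (hsum v hv)]
    _ = ∑ i, φ (v * u i * w i) :=
        map_sum_of_map_add hadd _ fun i => hRM _ (hcoeff i) _ (hw i)
    _ = ∑ i, v * u i * φ (w i) :=
        Finset.sum_congr rfl fun i _ => hlin _ (hw i) _ (hcoeff i)
    _ = v * ∑ i, u i * φ (w i) := by simp_rw [Finset.mul_sum, mul_assoc]

end DualBasis

section Unital

variable {S : Type*} [Ring S] {R : Subring S} {e : S}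

theorem mul_mem_of_sMul_eq_closure {A B : AddSubgroup S} (he : e ∈ R)
    (h : sMul A B = AddSubgroup.closure {z : S | ∃ r ∈ R, z = r * e})
    {a b : S} (ha : a ∈ A) (hb : b ∈ B) : a * b ∈ R := by
  obtain ⟨r, hr, hab⟩ := exists_eq_mul_of_mem_closure (h ▸ mul_mem_sMul ha hb)
  exact hab ▸ R.mul_mem hr he

theorem exists_fin_sum_eq_of_sMul_eq_closure {A B : AddSubgroup S}
    (h : sMul A B = AddSubgroup.closure {z : S | ∃ r ∈ R, z = r * e}) :
    ∃ (n : ℕ) (a b : Fin n → S), (∀ i, a i ∈ A) ∧ (∀ i, b i ∈ B) ∧ e = ∑ i, a i * b i :=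
  exists_fin_sum_of_mem_sMul (h ▸ AddSubgroup.subset_closure ⟨1, R.one_mem, (one_mul e).symm⟩)

theorem mul_eq_self_of_mem_sMul_left {A B C : AddSubgroup S} (hcomm : ∀ r ∈ R, e * r = r * e)
    (hidem : IsIdempotentElem e) (h : sMul A B = AddSubgroup.closure {z : S | ∃ r ∈ R, z = r * e})
    {v : S} (hv : v ∈ sMul (sMul A B) C) : e * v = v := by
  refine mul_eq_of_mem_sMul_left (fun q hq => ?_) hv
  obtain ⟨r, hr, rfl⟩ := exists_eq_mul_of_mem_closure (h ▸ hq)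
  rw [← mul_assoc, hcomm r hr, mul_assoc, hidem.eq]

theorem mul_eq_self_of_mem_sMul_right {A B C : AddSubgroup S} (hidem : IsIdempotentElem e)
    (h : sMul B C = AddSubgroup.closure {z : S | ∃ r ∈ R, z = r * e})
    {v : S} (hv : v ∈ sMul A (sMul B C)) : v * e = v := by
  refine mul_eq_of_mem_sMul_right (fun q hq => ?_) hv
  obtain ⟨r, hr, rfl⟩ := exists_eq_mul_of_mem_closure (h ▸ hq)
  rw [mul_assoc, hidem.eq]

theorem sMul_sMul_inv_sMul_eq {G : Type*} [Group G] {Θ : G → AddSubgroup S}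
    (hΘl : ∀ x : G, ∀ r ∈ R, ∀ u ∈ Θ x, r * u ∈ Θ x) (hΘ1 : Θ 1 = R.toAddSubgroup)
    (hrep1 : ∀ x y : G, sMul (sMul (Θ x) (Θ y)) (Θ y⁻¹) = sMul (Θ (x * y)) (Θ y⁻¹)) (x : G) :
    sMul (sMul (Θ x) (Θ x⁻¹)) (Θ x) = Θ x := by
  have h := hrep1 x x⁻¹
  rwa [inv_inv, mul_inv_cancel, hΘ1,
    sMul_eq_right_of_one_mem (A := R.toAddSubgroup) R.one_mem (hΘl x)] at h

end Unital

end PartialRepresentation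

open PartialRepresentation in
theorem statement18_general (S : Type u) [Ring S] (R : Subring S) (G : Type v) [Group G]
    (e : G → S) (he_mem : ∀ x, e x ∈ R)
    (he_central : ∀ x : G, ∀ r ∈ R, e x * r = r * e x)
    (he_idem : ∀ x, IsIdempotentElem (e x))
    (Θ : G → AddSubgroup S)
    (hΘl : ∀ x : G, ∀ r ∈ R, ∀ u ∈ Θ x, r * u ∈ Θ x)
    (hΘr : ∀ x : G, ∀ r ∈ R, ∀ u ∈ Θ x, u * r ∈ Θ x)
    (hΘ1 : Θ 1 = R.toAddSubgroup)
    (hrep1 : ∀ x y : G, sMul (sMul (Θ x) (Θ y)) (Θ y⁻¹) = sMul (Θ (x * y)) (Θ y⁻¹))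
    (hunital : ∀ x : G, sMul (Θ x) (Θ x⁻¹) =
      AddSubgroup.closure {z : S | ∃ r ∈ R, z = r * e x}) :
    ∀ x : G,
      -- finitely generated projective as a right `R`-module: a finite dual basis
      (∃ (n : ℕ) (u : Fin n → S) (_ : ∀ i, u i ∈ Θ x) (f : Fin n → S → S),
        (∀ i, ∀ v ∈ Θ x, f i v ∈ R) ∧
        (∀ i, ∀ v ∈ Θ x, ∀ w ∈ Θ x, f i (v + w) = f i v + f i w) ∧
        (∀ i, ∀ v ∈ Θ x, ∀ r ∈ R, f i (v * r) = f i v * r) ∧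
        (∀ v ∈ Θ x, v = ∑ i, u i * f i v)) ∧
      -- finitely generated projective as a left `R`-module: a finite dual basis
      (∃ (m : ℕ) (u : Fin m → S) (_ : ∀ j, u j ∈ Θ x) (g : Fin m → S → S),
        (∀ j, ∀ v ∈ Θ x, g j v ∈ R) ∧
        (∀ j, ∀ v ∈ Θ x, ∀ w ∈ Θ x, g j (v + w) = g j v + g j w) ∧
        (∀ j, ∀ v ∈ Θ x, ∀ r ∈ R, g j (r * v) = r * g j v) ∧
        (∀ v ∈ Θ x, v = ∑ j, g j v * u j)) ∧
      -- `R → End(Θ x` as a right module`)` (left multiplication) is surjective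
      (∀ φ : S → S, (∀ v ∈ Θ x, φ v ∈ Θ x) →
        (∀ v ∈ Θ x, ∀ w ∈ Θ x, φ (v + w) = φ v + φ w) →
        (∀ v ∈ Θ x, ∀ r ∈ R, φ (v * r) = φ v * r) →
        ∃ r ∈ R, ∀ v ∈ Θ x, φ v = r * v) ∧
      -- `R → End(Θ x` as a left module`)` (right multiplication) is surjective
      (∀ φ : S → S, (∀ v ∈ Θ x, φ v ∈ Θ x) →
        (∀ v ∈ Θ x, ∀ w ∈ Θ x, φ (v + w) = φ v + φ w) →
        (∀ v ∈ Θ x, ∀ r ∈ R, φ (r * v) = r * φ v) →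
        ∃ r ∈ R, ∀ v ∈ Θ x, φ v = v * r) := by
  intro x
  have hΘΘ := sMul_sMul_inv_sMul_eq hΘl hΘ1 hrep1 x
  have hunital' : sMul (Θ x⁻¹) (Θ x) = AddSubgroup.closure {z : S | ∃ r ∈ R, z = r * e x⁻¹} := by
    simpa using hunital x⁻¹
  have hMN (a) (ha : a ∈ Θ x) (b) (hb : b ∈ Θ x⁻¹) : a * b ∈ R :=
    mul_mem_of_sMul_eq_closure (he_mem x) (hunital x) ha hb
  have hNM (b) (hb : b ∈ Θ x⁻¹) (a) (ha : a ∈ Θ x) : b * a ∈ R :=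
    mul_mem_of_sMul_eq_closure (he_mem x⁻¹) hunital' hb ha
  have hleft (v) (hv : v ∈ Θ x) : e x * v = v :=
    mul_eq_self_of_mem_sMul_left (he_central x) (he_idem x) (hunital x) (hΘΘ.symm ▸ hv)
  have hright (v) (hv : v ∈ Θ x) : v * e x⁻¹ = v :=
    mul_eq_self_of_mem_sMul_right (he_idem x⁻¹) hunital' (by rwa [← sMul_assoc, hΘΘ])
  obtain ⟨n, u, w, hu, hw, hex⟩ := exists_fin_sum_eq_of_sMul_eq_closure (hunital x)
  obtain ⟨m, u', w', hu', hw', hex'⟩ := exists_fin_sum_eq_of_sMul_eq_closure hunital'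
  rw [hex] at hleft
  rw [hex'] at hright
  exact ⟨hasRightDualBasis_of_sum_mul_eq hu hw hNM hleft,
    hasLeftDualBasis_of_mul_sum_eq hu' hw' hMN hright,
    rightEndIsLeftMul_of_sum_mul_eq hu hw hMN hNM (hΘr x) hleft,
    leftEndIsRightMul_of_mul_sum_eq hu' hw' hMN hNM (hΘl x) hright⟩

/-- let `R ⊆ S` be a ring extension with the same unity and let
`Θ : G → S_R(S)` be a unital partial representation into the monoid of `R`-subbimodules
of `S`, with `Θ x Θ x⁻¹ = R 1_x` for central idempotents `1_x = e x` of `R`.  Then each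
`Θ x` is a partially invertible `R`-bimodule, i.e. `[Θ x] ∈ PicS(R)`:
`Θ x` is finitely generated projective as a right and as a left `R`-module (witnessed by
finite dual bases), and every right (resp. left) `R`-linear endomorphism of `Θ x` is left
(resp. right) multiplication by an element of `R`. -/
theorem statement18 (S : Type u) [Ring S] (R : Subring S) (G : Type v) [Group G]
    (e : G → S) (he_mem : ∀ x, e x ∈ R)
    (he_central : ∀ x : G, ∀ r ∈ R, e x * r = r * e x)
    (he_idem : ∀ x, IsIdempotentElem (e x))
    (Θ : G → AddSubgroup S)
    (hΘl : ∀ x : G, ∀ r ∈ R, ∀ u ∈ Θ x, r * u ∈ Θ x)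
    (hΘr : ∀ x : G, ∀ r ∈ R, ∀ u ∈ Θ x, u * r ∈ Θ x)
    (hΘ1 : Θ 1 = R.toAddSubgroup)
    (hrep1 : ∀ x y : G, sMul (sMul (Θ x) (Θ y)) (Θ y⁻¹) = sMul (Θ (x * y)) (Θ y⁻¹))
    (hrep2 : ∀ x y : G, sMul (sMul (Θ x⁻¹) (Θ x)) (Θ y) = sMul (Θ x⁻¹) (Θ (x * y)))
    (hunital : ∀ x : G, sMul (Θ x) (Θ x⁻¹) =
      AddSubgroup.closure {z : S | ∃ r ∈ R, z = r * e x}) :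
    ∀ x : G,
      -- finitely generated projective as a right `R`-module: a finite dual basis
      (∃ (n : ℕ) (u : Fin n → S) (_ : ∀ i, u i ∈ Θ x) (f : Fin n → S → S),
        (∀ i, ∀ v ∈ Θ x, f i v ∈ R) ∧
        (∀ i, ∀ v ∈ Θ x, ∀ w ∈ Θ x, f i (v + w) = f i v + f i w) ∧
        (∀ i, ∀ v ∈ Θ x, ∀ r ∈ R, f i (v * r) = f i v * r) ∧
        (∀ v ∈ Θ x, v = ∑ i, u i * f i v)) ∧
      -- finitely generated projective as a left `R`-module: a finite dual basis
      (∃ (m : ℕ) (u : Fin m → S) (_ : ∀ j, u j ∈ Θ x) (g : Fin m → S → S),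
        (∀ j, ∀ v ∈ Θ x, g j v ∈ R) ∧
        (∀ j, ∀ v ∈ Θ x, ∀ w ∈ Θ x, g j (v + w) = g j v + g j w) ∧
        (∀ j, ∀ v ∈ Θ x, ∀ r ∈ R, g j (r * v) = r * g j v) ∧
        (∀ v ∈ Θ x, v = ∑ j, g j v * u j)) ∧
      -- `R → End(Θ x` as a right module`)` (left multiplication) is surjective
      (∀ φ : S → S, (∀ v ∈ Θ x, φ v ∈ Θ x) →
        (∀ v ∈ Θ x, ∀ w ∈ Θ x, φ (v + w) = φ v + φ w) →
        (∀ v ∈ Θ x, ∀ r ∈ R, φ (v * r) = φ v * r) →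
        ∃ r ∈ R, ∀ v ∈ Θ x, φ v = r * v) ∧
      -- `R → End(Θ x` as a left module`)` (right multiplication) is surjective
      (∀ φ : S → S, (∀ v ∈ Θ x, φ v ∈ Θ x) →
        (∀ v ∈ Θ x, ∀ w ∈ Θ x, φ (v + w) = φ v + φ w) →
        (∀ v ∈ Θ x, ∀ r ∈ R, φ (r * v) = r * φ v) →
        ∃ r ∈ R, ∀ v ∈ Θ x, φ v = v * r) :=
  statement18_general S R G e he_mem he_central he_idem Θ hΘl hΘr hΘ1 hrep1 hunital
end
end

section
/- Let R ⊆ S be a ring extension with the same unity, Θ : G → S_R(S) a unital partial representation with Θ_x Θ_{x⁻¹} = R1_x, and M an S-bimodule. Then the map m_l : Θ_x ⊗_R M → Θ_x M, u_x ⊗ m ↦ u_x m, is an isomorphism of R-S-bimodules, with inverse m ↦ Σ_{(x)} ω_x ⊗ ω_{x⁻¹} m where Σ_{(x)} ω_x ω_{x⁻¹} = 1_x. Similarly M ⊗_R Θ_x → M Θ_x, m ⊗ u_x ↦ m u_x, is an S-R-bimodule isomorphism. -/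
noncomputable section

open MulOpposite TensorProduct

universe u v

/-- The subgroup of balancing relations defining the tensor product `M ⊗_R N` of bimodules
over the (possibly noncommutative) ring `R`, where `ρ` is the right `R`-action on `M` and
`σ` is the left `R`-action on `N`. -/
abbrev bal {R : Type*} [Ring R] {M N : Type*} [AddCommGroup M] [AddCommGroup N]
    (ρ : R → M → M) (σ : R → N → N) : AddSubgroup (TensorProduct ℤ M N) :=
  AddSubgroup.closure { z | ∃ (m : M) (r : R) (n : N), z = ρ r m ⊗ₜ[ℤ] n - m ⊗ₜ[ℤ] σ r n }

/-- The tensor product `M ⊗_R N` over a noncommutative ring `R`. -/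
abbrev BT {R : Type*} [Ring R] {M N : Type*} [AddCommGroup M] [AddCommGroup N]
    (ρ : R → M → M) (σ : R → N → N) : Type _ :=
  TensorProduct ℤ M N ⧸ bal ρ σ

/-- Pure tensors `m ⊗ n` in `M ⊗_R N`. -/
def BT.mk {R : Type*} [Ring R] {M N : Type*} [AddCommGroup M] [AddCommGroup N]
    (ρ : R → M → M) (σ : R → N → N) (m : M) (n : N) : BT ρ σ :=
  QuotientAddGroup.mk (m ⊗ₜ[ℤ] n)

/-! The multiplication map `Θ_x ⊗_R M → Θ_x M` is a well-defined surjective additive map that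
respects the bimodule actions. A decomposition `1_x = ∑ ω_i ω'_i` with `ω'_i Θ_x ⊆ R` gives
`m ↦ ∑ ω_i ⊗ ω'_i m`, a left inverse: in `ω_i ⊗ ω'_i u m` the scalar `ω'_i u` lies in `R`, so it
moves across the tensor sign and `∑ ω_i ω'_i u = 1_x u = u`. Every decomposition gives a left
inverse of the same bijection, hence the same inverse. The right-hand map is the mirror image,
using a decomposition of `1_{x⁻¹}`. -/

namespace BT

variable {R : Type*} [Ring R] {M N P : Type*} [AddCommGroup M] [AddCommGroup N] [AddCommGroup P]
  (ρ : R → M → M) (σ : R → N → N)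

theorem mk_balance (r : R) (m : M) (n : N) : mk ρ σ (ρ r m) n = mk ρ σ m (σ r n) :=
  (QuotientAddGroup.eq.2 <| by
    rw [neg_add_eq_sub]
    exact AddSubgroup.subset_closure ⟨m, r, n, rfl⟩).symm

def mkAddHom : M →+ N →+ BT ρ σ :=
  AddMonoidHom.mk'
    (fun m => AddMonoidHom.mk' (mk ρ σ m) fun n n' =>
      congrArg QuotientAddGroup.mk (tmul_add m n n'))
    fun m m' => by ext n; exact congrArg QuotientAddGroup.mk (add_tmul m m' n)

@[simp]
theorem mkAddHom_apply (m : M) (n : N) : mkAddHom ρ σ m n = mk ρ σ m n := rfl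

@[elab_as_elim]
theorem induction_on {p : BT ρ σ → Prop} (t : BT ρ σ) (mk : ∀ m n, p (mk ρ σ m n))
    (add : ∀ a b, p a → p b → p (a + b)) : p t := by
  induction t using QuotientAddGroup.induction_on with
  | H z =>
    induction z using TensorProduct.induction_on with
    | zero => simpa [BT.mk] using mk 0 0
    | tmul m n => exact mk m n
    | add a b ha hb => exact add _ _ ha hb

theorem addHom_ext {f g : BT ρ σ →+ P} (h : ∀ m n, f (mk ρ σ m n) = g (mk ρ σ m n)) : f = g :=
  AddMonoidHom.ext fun t =>
    induction_on ρ σ t h fun a b ha hb => by rw [map_add, map_add, ha, hb]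

theorem closure_range_mk : AddSubgroup.closure (Set.range fun p : M × N => mk ρ σ p.1 p.2) = ⊤ :=
  eq_top_iff.2 fun t _ =>
    induction_on ρ σ t (fun m n => AddSubgroup.subset_closure ⟨(m, n), rfl⟩)
      fun _ _ => add_mem

def lift (f : M →+ N →+ P) (hf : ∀ r m n, f (ρ r m) n = f m (σ r n)) : BT ρ σ →+ P :=
  QuotientAddGroup.lift _ (liftAddHom f fun k m n => by simp) <|
    (AddSubgroup.closure_le _).2 <| by
      rintro _ ⟨m, r, n, rfl⟩
      simp [hf]

@[simp]
theorem lift_mk (f : M →+ N →+ P) (hf : ∀ r m n, f (ρ r m) n = f m (σ r n)) (m : M) (n : N) :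
    lift ρ σ f hf (mk ρ σ m n) = f m n := by
  simp [lift, mk]

end BT

theorem AddMonoidHom.exists_addEquiv_of_range_eq {X P : Type*} [AddGroup X] [AddGroup P]
    {f : X →+ P} (hf : Function.Injective f) {A : AddSubgroup P} (hA : f.range = A) :
    ∃ φ : X ≃+ A, ∀ t, (φ t : P) = f t :=
  ⟨(AddMonoidHom.ofInjective hf).trans (AddEquiv.addSubgroupCongr hA), fun _ => rfl⟩

theorem AddEquiv.symm_apply_eq_of_leftInverse {X P : Type*} [AddGroup X] [AddGroup P]
    {A : AddSubgroup P} {f : X → P} (φ : X ≃+ A) (hφ : ∀ t, (φ t : P) = f t) {g : P → X}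
    (hg : Function.LeftInverse g f) (v : A) : φ.symm v = g v := by
  conv_lhs => rw [← hg (φ.symm v), ← hφ, φ.apply_symm_apply]

section LeftMul

variable {S : Type*} [Ring S] {R : Subring S} {U : AddSubgroup S}
  {M : Type*} [AddCommGroup M] [Module S M]
  (ρ : R → U → U) (σ : R → M → M)
  (hρ : ∀ r u, (ρ r u : S) = u * r) (hσ : ∀ r m, σ r m = (r : S) • m)

def leftMul : BT ρ σ →+ M :=
  BT.lift ρ σ ((smulAddHom S M).comp U.subtype) fun r u m => by simp [hρ, hσ, mul_smul]

@[simp]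
theorem leftMul_mk (u : U) (m : M) : leftMul ρ σ hρ hσ (BT.mk ρ σ u m) = (u : S) • m :=
  BT.lift_mk ..

theorem range_leftMul :
    (leftMul ρ σ hρ hσ).range = AddSubgroup.closure {z | ∃ u ∈ U, ∃ m : M, z = u • m} := by
  rw [AddMonoidHom.range_eq_map, ← BT.closure_range_mk, AddMonoidHom.map_closure, ← Set.range_comp]
  congr 1
  ext z
  simp [eq_comm]

def leftMulInv {n : ℕ} (ω : Fin n → U) (ω' : Fin n → S) : M →+ BT ρ σ :=
  ∑ i, (BT.mkAddHom ρ σ (ω i)).comp (smulAddHom S M (ω' i))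

theorem leftMulInv_apply {n : ℕ} (ω : Fin n → U) (ω' : Fin n → S) (m : M) :
    leftMulInv ρ σ ω ω' m = ∑ i, BT.mk ρ σ (ω i) (ω' i • m) := by
  simp [leftMulInv, AddMonoidHom.finsetSum_apply]

theorem leftMulInv_leftInverse {n : ℕ} (ω : Fin n → U) (ω' : Fin n → S)
    (hω' : ∀ i, ∀ u ∈ U, ω' i * u ∈ R) (hunit : ∀ u ∈ U, (∑ i, (ω i : S) * ω' i) * u = u) :
    Function.LeftInverse (leftMulInv ρ σ ω ω') (leftMul ρ σ hρ hσ) := by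
  intro t
  induction t using BT.induction_on with
  | mk u m =>
    let r : Fin n → R := fun i => ⟨ω' i * u, hω' i u u.2⟩
    have hsum : ∑ i, ρ (r i) (ω i) = u := Subtype.ext <| by
      simp only [AddSubgroup.val_finsetSum, hρ, r, ← mul_assoc, ← Finset.sum_mul, hunit u u.2]
    calc leftMulInv ρ σ ω ω' (leftMul ρ σ hρ hσ (BT.mk ρ σ u m))
        = ∑ i, BT.mk ρ σ (ω i) (σ (r i) m) := by simp [leftMulInv_apply, hσ, r, mul_smul]
      _ = BT.mk ρ σ u m := by
        simp only [← BT.mk_balance, ← BT.mkAddHom_apply, ← AddMonoidHom.finsetSum_apply,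
          ← map_sum, hsum]
  | add a b ha hb => rw [map_add, map_add, ha, hb]

theorem leftMul_lAct (lAct : R → BT ρ σ →+ BT ρ σ) (hU : ∀ r ∈ R, ∀ u ∈ U, r * u ∈ U)
    (hlAct : ∀ (r : R) (u u' : U) (m : M), (u' : S) = r * u →
      lAct r (BT.mk ρ σ u m) = BT.mk ρ σ u' m) (r : R) (t : BT ρ σ) :
    leftMul ρ σ hρ hσ (lAct r t) = (r : S) • leftMul ρ σ hρ hσ t :=
  DFunLike.congr_fun (BT.addHom_ext ρ σ
    (f := (leftMul ρ σ hρ hσ).comp (lAct r)) (g := (smulAddHom S M r).comp (leftMul ρ σ hρ hσ))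
    fun u m => by simp [hlAct r u ⟨r * u, hU r r.2 u u.2⟩ m rfl, mul_smul]) t

theorem leftMul_rAct [Module Sᵐᵒᵖ M] [SMulCommClass S Sᵐᵒᵖ M]
    (rAct : S → BT ρ σ →+ BT ρ σ)
    (hrAct : ∀ (s : S) (u : U) (m : M), rAct s (BT.mk ρ σ u m) = BT.mk ρ σ u (op s • m))
    (s : S) (t : BT ρ σ) :
    leftMul ρ σ hρ hσ (rAct s t) = op s • leftMul ρ σ hρ hσ t :=
  DFunLike.congr_fun (BT.addHom_ext ρ σ
    (f := (leftMul ρ σ hρ hσ).comp (rAct s))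
    (g := (smulAddHom Sᵐᵒᵖ M (op s)).comp (leftMul ρ σ hρ hσ))
    fun u m => by simp [hrAct, smul_comm]) t

end LeftMul

section RightMul

variable {S : Type*} [Ring S] {R : Subring S} {U : AddSubgroup S}
  {M : Type*} [AddCommGroup M] [Module Sᵐᵒᵖ M]
  (ρ : R → M → M) (σ : R → U → U)
  (hρ : ∀ r m, ρ r m = op (r : S) • m) (hσ : ∀ r u, (σ r u : S) = r * u)

def rightMul : BT ρ σ →+ M :=
  BT.lift ρ σ
    ((smulAddHom Sᵐᵒᵖ M).flip.compl₂ ((opAddEquiv : S ≃+ Sᵐᵒᵖ).toAddMonoidHom.comp U.subtype))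
    fun r m u => by simp [hρ, hσ, smul_smul]

@[simp]
theorem rightMul_mk (m : M) (u : U) : rightMul ρ σ hρ hσ (BT.mk ρ σ m u) = op (u : S) • m :=
  BT.lift_mk ..

theorem range_rightMul :
    (rightMul ρ σ hρ hσ).range = AddSubgroup.closure {z | ∃ m : M, ∃ u ∈ U, z = op u • m} := by
  rw [AddMonoidHom.range_eq_map, ← BT.closure_range_mk, AddMonoidHom.map_closure, ← Set.range_comp]
  congr 1
  ext z
  simp [eq_comm]

def rightMulInv {n : ℕ} (ω' : Fin n → S) (ω : Fin n → U) : M →+ BT ρ σ :=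
  ∑ i, ((BT.mkAddHom ρ σ).flip (ω i)).comp (smulAddHom Sᵐᵒᵖ M (op (ω' i)))

theorem rightMulInv_apply {n : ℕ} (ω' : Fin n → S) (ω : Fin n → U) (m : M) :
    rightMulInv ρ σ ω' ω m = ∑ i, BT.mk ρ σ (op (ω' i) • m) (ω i) := by
  simp [rightMulInv, AddMonoidHom.finsetSum_apply]

theorem rightMulInv_leftInverse {n : ℕ} (ω' : Fin n → S) (ω : Fin n → U)
    (hω' : ∀ i, ∀ u ∈ U, u * ω' i ∈ R) (hunit : ∀ u ∈ U, u * ∑ i, ω' i * (ω i : S) = u) :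
    Function.LeftInverse (rightMulInv ρ σ ω' ω) (rightMul ρ σ hρ hσ) := by
  intro t
  induction t using BT.induction_on with
  | mk m u =>
    let r : Fin n → R := fun i => ⟨u * ω' i, hω' i u u.2⟩
    have hsum : ∑ i, σ (r i) (ω i) = u := Subtype.ext <| by
      simp only [AddSubgroup.val_finsetSum, hσ, r, mul_assoc, ← Finset.mul_sum, hunit u u.2]
    calc rightMulInv ρ σ ω' ω (rightMul ρ σ hρ hσ (BT.mk ρ σ m u))
        = ∑ i, BT.mk ρ σ (ρ (r i) m) (ω i) := by simp [rightMulInv_apply, hρ, r, smul_smul]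
      _ = BT.mk ρ σ m u := by
        simp only [BT.mk_balance]
        rw [← hsum, ← BT.mkAddHom_apply, map_sum]
        rfl
  | add a b ha hb => rw [map_add, map_add, ha, hb]

theorem rightMul_lAct [Module S M] [SMulCommClass S Sᵐᵒᵖ M]
    (lAct : S → BT ρ σ →+ BT ρ σ)
    (hlAct : ∀ (s : S) (m : M) (u : U), lAct s (BT.mk ρ σ m u) = BT.mk ρ σ (s • m) u)
    (s : S) (t : BT ρ σ) :
    rightMul ρ σ hρ hσ (lAct s t) = s • rightMul ρ σ hρ hσ t :=
  DFunLike.congr_fun (BT.addHom_ext ρ σ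
    (f := (rightMul ρ σ hρ hσ).comp (lAct s)) (g := (smulAddHom S M s).comp (rightMul ρ σ hρ hσ))
    fun m u => by simp [hlAct, smul_comm]) t

theorem rightMul_rAct (rAct : R → BT ρ σ →+ BT ρ σ) (hU : ∀ r ∈ R, ∀ u ∈ U, u * r ∈ U)
    (hrAct : ∀ (r : R) (m : M) (u u' : U), (u' : S) = u * r →
      rAct r (BT.mk ρ σ m u) = BT.mk ρ σ m u') (r : R) (t : BT ρ σ) :
    rightMul ρ σ hρ hσ (rAct r t) = op (r : S) • rightMul ρ σ hρ hσ t :=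
  DFunLike.congr_fun (BT.addHom_ext ρ σ
    (f := (rightMul ρ σ hρ hσ).comp (rAct r))
    (g := (smulAddHom Sᵐᵒᵖ M (op (r : S))).comp (rightMul ρ σ hρ hσ))
    fun m u => by simp [hrAct r m u ⟨u * r, hU r r.2 u u.2⟩ rfl, smul_smul]) t

end RightMul

theorem statement19_general (S : Type u) [Ring S] (R : Subring S) (G : Type v) [Group G]
    (e : G → S)
    (Θ : G → AddSubgroup S)
    (hΘl : ∀ x : G, ∀ r ∈ R, ∀ u ∈ Θ x, r * u ∈ Θ x)
    (hΘr : ∀ x : G, ∀ r ∈ R, ∀ u ∈ Θ x, u * r ∈ Θ x)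
    (hunit_l : ∀ x : G, ∀ u ∈ Θ x, e x * u = u)
    (hunit_r : ∀ x : G, ∀ u ∈ Θ x, u * e x⁻¹ = u)
    (hdec : ∀ x : G, ∃ (n : ℕ) (w : Fin n → S × S),
      (∀ i, (w i).1 ∈ Θ x ∧ (w i).2 ∈ Θ x⁻¹) ∧ (∑ i, (w i).1 * (w i).2) = e x)
    (hprod : ∀ x : G, ∀ u ∈ Θ x, ∀ v ∈ Θ x⁻¹, u * v ∈ R ∧ u * v * e x = u * v)
    (x : G) (M : Type u) [AddCommGroup M]
    [Module S M] [Module Sᵐᵒᵖ M] [SMulCommClass S Sᵐᵒᵖ M] :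
    -- the actions defining `Θ x ⊗_R M`
    ∀ ρ : ↥R → ↥(Θ x) → ↥(Θ x), (∀ r u, ((ρ r u : S) = (u : S) * (r : S))) →
    ∀ σ : ↥R → M → M, (σ = fun (r : ↥R) (m : M) => r.val • m) →
    -- the subbimodule `Θ x · M` of `M`
    ∀ ΘxM : AddSubgroup M,
      (ΘxM = AddSubgroup.closure {z : M | ∃ u ∈ Θ x, ∃ m : M, z = u • m}) →
    -- the left `R`-action and the right `S`-action on `Θ x ⊗_R M`
    ∀ lAct : ↥R → (BT ρ σ →+ BT ρ σ),
      (∀ (r : ↥R) (u u' : ↥(Θ x)) (m : M), (u' : S) = (r : S) * (u : S) →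
        lAct r (BT.mk ρ σ u m) = BT.mk ρ σ u' m) →
    ∀ rAct : S → (BT ρ σ →+ BT ρ σ),
      (∀ (s : S) (u : ↥(Θ x)) (m : M),
        rAct s (BT.mk ρ σ u m) = BT.mk ρ σ u (op s • m)) →
    -- `m_l` is an `R`-`S`-bimodule isomorphism with the stated inverse
    ((∃ φ : BT ρ σ ≃+ ↥ΘxM,
      (∀ (u : ↥(Θ x)) (m : M), (φ (BT.mk ρ σ u m) : M) = (u : S) • m) ∧
      (∀ (r : ↥R) (t : BT ρ σ), (φ (lAct r t) : M) = (r : S) • (φ t : M)) ∧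
      (∀ (s : S) (t : BT ρ σ), (φ (rAct s t) : M) = op s • (φ t : M)) ∧
      (∀ (n : ℕ) (w : Fin n → ↥(Θ x) × S),
        (∀ i, (w i).2 ∈ Θ x⁻¹) → (∑ i, ((w i).1 : S) * (w i).2) = e x →
        ∀ v : ↥ΘxM,
          φ.symm v = ∑ i, BT.mk ρ σ ((w i).1) (((w i).2 : S) • (v : M)))) ∧
    -- `m_r` is an `S`-`R`-bimodule isomorphism
    (∀ ρ' : ↥R → M → M, (ρ' = fun (r : ↥R) (m : M) => op r.val • m) →
     ∀ σ' : ↥R → ↥(Θ x) → ↥(Θ x), (∀ r u, ((σ' r u : S) = (r : S) * (u : S))) →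
     ∀ MΘx : AddSubgroup M,
       (MΘx = AddSubgroup.closure {z : M | ∃ m : M, ∃ u ∈ Θ x, z = op u • m}) →
     ∀ lAct' : S → (BT ρ' σ' →+ BT ρ' σ'),
       (∀ (s : S) (m : M) (u : ↥(Θ x)),
         lAct' s (BT.mk ρ' σ' m u) = BT.mk ρ' σ' (s • m) u) →
     ∀ rAct' : ↥R → (BT ρ' σ' →+ BT ρ' σ'),
       (∀ (r : ↥R) (m : M) (u u' : ↥(Θ x)), (u' : S) = (u : S) * (r : S) →
         rAct' r (BT.mk ρ' σ' m u) = BT.mk ρ' σ' m u') →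
       ∃ ψ : BT ρ' σ' ≃+ ↥MΘx,
         (∀ (m : M) (u : ↥(Θ x)), (ψ (BT.mk ρ' σ' m u) : M) = op (u : S) • m) ∧
         (∀ (s : S) (t : BT ρ' σ'), (ψ (lAct' s t) : M) = s • (ψ t : M)) ∧
         (∀ (r : ↥R) (t : BT ρ' σ'), (ψ (rAct' r t) : M) = op (r : S) • (ψ t : M)))) := by
  intro ρ hρ σ hσ ΘxM hΘxM lAct hlAct rAct hrAct
  subst hΘxM
  have hσ : ∀ (r : R) (m : M), σ r m = (r : S) • m := fun r m => by rw [hσ]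
  have hinv : ∀ (k : ℕ) (ω : Fin k → Θ x) (ω' : Fin k → S), (∀ i, ω' i ∈ Θ x⁻¹) →
      ∑ i, (ω i : S) * ω' i = e x →
      Function.LeftInverse (leftMulInv ρ σ ω ω') (leftMul ρ σ hρ hσ) :=
    fun k ω ω' hω' hsum => leftMulInv_leftInverse ρ σ hρ hσ ω ω'
      (fun i u hu => (hprod x⁻¹ _ (hω' i) u (by rwa [inv_inv])).1)
      fun u hu => by rw [hsum, hunit_l x u hu]
  obtain ⟨n, w, hw, hsum⟩ := hdec x
  obtain ⟨φ, hφ⟩ := AddMonoidHom.exists_addEquiv_of_range_eq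
    (hinv n (fun i => ⟨(w i).1, (hw i).1⟩) (fun i => (w i).2) (fun i => (hw i).2) hsum).injective
    (range_leftMul ρ σ hρ hσ)
  refine ⟨⟨φ, fun u m => by rw [hφ, leftMul_mk],
    fun r t => by rw [hφ, hφ, leftMul_lAct ρ σ hρ hσ lAct (hΘl x) hlAct],
    fun s t => by rw [hφ, hφ, leftMul_rAct ρ σ hρ hσ rAct hrAct],
    fun k w' hw' hsum' v => (φ.symm_apply_eq_of_leftInverse hφ (hinv k _ _ hw' hsum') v).trans
      (leftMulInv_apply ρ σ _ _ _)⟩, ?_⟩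
  intro ρ' hρ' σ' hσ' MΘx hMΘx lAct' hlAct' rAct' hrAct'
  subst hMΘx
  have hρ' : ∀ (r : R) (m : M), ρ' r m = op (r : S) • m := fun r m => by rw [hρ']
  obtain ⟨n', w', hw', hsum'⟩ := hdec x⁻¹
  obtain ⟨ψ, hψ⟩ := AddMonoidHom.exists_addEquiv_of_range_eq
    (rightMulInv_leftInverse ρ' σ' hρ' hσ' (fun i => (w' i).1)
      (fun i => ⟨(w' i).2, inv_inv x ▸ (hw' i).2⟩)
      (fun i u hu => (hprod x u hu _ (hw' i).1).1)
      fun u hu => by rw [hsum', hunit_r x u hu]).injective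
    (range_rightMul ρ' σ' hρ' hσ')
  exact ⟨ψ, fun m u => by rw [hψ, rightMul_mk],
    fun s t => by rw [hψ, hψ, rightMul_lAct ρ' σ' hρ' hσ' lAct' hlAct'],
    fun r t => by rw [hψ, hψ, rightMul_rAct ρ' σ' hρ' hσ' rAct' (hΘr x) hrAct']⟩

/-- let `R ⊆ S` be a ring extension with the same unity,
`Θ : G → S_R(S)` a unital partial representation with `Θ x Θ x⁻¹ = R 1_x`, and `M` an
`S`-bimodule.  Then `m_l : Θ x ⊗_R M → Θ x M`, `u ⊗ m ↦ u m`, is an isomorphism of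
`R`-`S`-bimodules, with inverse `m ↦ ∑ ω_i ⊗ ω_i' m` where `∑ ω_i ω_i' = 1_x`; similarly
`m_r : M ⊗_R Θ x → M Θ x`, `m ⊗ u ↦ m u`, is an `S`-`R`-bimodule isomorphism. -/
theorem statement19 (S : Type u) [Ring S] (R : Subring S) (G : Type v) [Group G]
    (e : G → S) (he_mem : ∀ x, e x ∈ R)
    (he_central : ∀ x : G, ∀ r ∈ R, e x * r = r * e x)
    (he_idem : ∀ x, IsIdempotentElem (e x))
    (Θ : G → AddSubgroup S)
    (hΘl : ∀ x : G, ∀ r ∈ R, ∀ u ∈ Θ x, r * u ∈ Θ x)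
    (hΘr : ∀ x : G, ∀ r ∈ R, ∀ u ∈ Θ x, u * r ∈ Θ x)
    (hΘ1 : Θ 1 = R.toAddSubgroup)
    (hrep1 : ∀ x y : G, ∀ u ∈ Θ x, ∀ v ∈ Θ y, ∀ w ∈ Θ y⁻¹, u * v * w ∈ Θ (x * y))
    (hunit_l : ∀ x : G, ∀ u ∈ Θ x, e x * u = u)
    (hunit_r : ∀ x : G, ∀ u ∈ Θ x, u * e x⁻¹ = u)
    (hdec : ∀ x : G, ∃ (n : ℕ) (w : Fin n → S × S),
      (∀ i, (w i).1 ∈ Θ x ∧ (w i).2 ∈ Θ x⁻¹) ∧ (∑ i, (w i).1 * (w i).2) = e x)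
    (hprod : ∀ x : G, ∀ u ∈ Θ x, ∀ v ∈ Θ x⁻¹, u * v ∈ R ∧ u * v * e x = u * v)
    (x : G) (M : Type u) [AddCommGroup M]
    [Module S M] [Module Sᵐᵒᵖ M] [SMulCommClass S Sᵐᵒᵖ M] :
    -- the actions defining `Θ x ⊗_R M`
    ∀ ρ : ↥R → ↥(Θ x) → ↥(Θ x), (∀ r u, ((ρ r u : S) = (u : S) * (r : S))) →
    ∀ σ : ↥R → M → M, (σ = fun (r : ↥R) (m : M) => r.val • m) →
    -- the subbimodule `Θ x · M` of `M`
    ∀ ΘxM : AddSubgroup M,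
      (ΘxM = AddSubgroup.closure {z : M | ∃ u ∈ Θ x, ∃ m : M, z = u • m}) →
    -- the left `R`-action and the right `S`-action on `Θ x ⊗_R M`
    ∀ lAct : ↥R → (BT ρ σ →+ BT ρ σ),
      (∀ (r : ↥R) (u u' : ↥(Θ x)) (m : M), (u' : S) = (r : S) * (u : S) →
        lAct r (BT.mk ρ σ u m) = BT.mk ρ σ u' m) →
    ∀ rAct : S → (BT ρ σ →+ BT ρ σ),
      (∀ (s : S) (u : ↥(Θ x)) (m : M),
        rAct s (BT.mk ρ σ u m) = BT.mk ρ σ u (op s • m)) →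
    -- `m_l` is an `R`-`S`-bimodule isomorphism with the stated inverse
    ((∃ φ : BT ρ σ ≃+ ↥ΘxM,
      (∀ (u : ↥(Θ x)) (m : M), (φ (BT.mk ρ σ u m) : M) = (u : S) • m) ∧
      (∀ (r : ↥R) (t : BT ρ σ), (φ (lAct r t) : M) = (r : S) • (φ t : M)) ∧
      (∀ (s : S) (t : BT ρ σ), (φ (rAct s t) : M) = op s • (φ t : M)) ∧
      (∀ (n : ℕ) (w : Fin n → ↥(Θ x) × S),
        (∀ i, (w i).2 ∈ Θ x⁻¹) → (∑ i, ((w i).1 : S) * (w i).2) = e x →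
        ∀ v : ↥ΘxM,
          φ.symm v = ∑ i, BT.mk ρ σ ((w i).1) (((w i).2 : S) • (v : M)))) ∧
    -- `m_r` is an `S`-`R`-bimodule isomorphism
    (∀ ρ' : ↥R → M → M, (ρ' = fun (r : ↥R) (m : M) => op r.val • m) →
     ∀ σ' : ↥R → ↥(Θ x) → ↥(Θ x), (∀ r u, ((σ' r u : S) = (r : S) * (u : S))) →
     ∀ MΘx : AddSubgroup M,
       (MΘx = AddSubgroup.closure {z : M | ∃ m : M, ∃ u ∈ Θ x, z = op u • m}) →
     ∀ lAct' : S → (BT ρ' σ' →+ BT ρ' σ'),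
       (∀ (s : S) (m : M) (u : ↥(Θ x)),
         lAct' s (BT.mk ρ' σ' m u) = BT.mk ρ' σ' (s • m) u) →
     ∀ rAct' : ↥R → (BT ρ' σ' →+ BT ρ' σ'),
       (∀ (r : ↥R) (m : M) (u u' : ↥(Θ x)), (u' : S) = (u : S) * (r : S) →
         rAct' r (BT.mk ρ' σ' m u) = BT.mk ρ' σ' m u') →
       ∃ ψ : BT ρ' σ' ≃+ ↥MΘx,
         (∀ (m : M) (u : ↥(Θ x)), (ψ (BT.mk ρ' σ' m u) : M) = op (u : S) • m) ∧
         (∀ (s : S) (t : BT ρ' σ'), (ψ (lAct' s t) : M) = s • (ψ t : M)) ∧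
         (∀ (r : ↥R) (t : BT ρ' σ'), (ψ (rAct' r t) : M) = op (r : S) • (ψ t : M)))) :=
  statement19_general S R G e Θ hΘl hΘr hunit_l hunit_r hdec hprod x M
end
end
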